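/- Let f : ℝⁿ → ℝ be twice continuously differentiable with ∇²f Lipschitz continuous with constant L_H in the operator norm. Let μ ∈ (0, 1), η ∈ (0, 1), εH > 0, β ∈ (0, 1), x ∈ ℝⁿ with x > 0 componentwise, and d ∈ ℝⁿ, d ≠ 0, with ‖X⁻¹X̄d‖∞ ≤ β. Define g = X̄(∇f(x) − μX⁻¹e) and H = X̄(∇²f(x) + μX⁻²)X̄. Suppose that dᵀ(H + 2εH·I)d ≥ εH‖d‖² and that gᵀd = −γ·dᵀ(H + 2εH·I)d for some γ ≥ 1. Then for every α ∈ (0, 1]: if φ_μ(x + αX̄d) − φ_μ(x) ≥ −(η/6)·α³‖d‖³, then α² ≥ 6(1 − β)²·εH / (((L_H + η)(1 − β)² + (2 − β))·‖d‖). -/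

import Mathlib

open Matrix

/-- The Euclidean norm of a vector in `Fin n → ℝ`. -/
noncomputable def euclNorm {n : ℕ} (v : Fin n → ℝ) : ℝ := Real.sqrt (∑ i, (v i)^2)

/-- The operator norm (induced by the Euclidean norm) of a matrix. -/
noncomputable def opNorm {n : ℕ} (A : Matrix (Fin n) (Fin n) ℝ) : ℝ :=
  ‖Matrix.toEuclideanCLM (𝕜 := ℝ) A‖

/-- The continuous linear map `w ↦ ∑ i, v i * w i`. -/
noncomputable def dotCLM {n : ℕ} (v : Fin n → ℝ) : (Fin n → ℝ) →L[ℝ] ℝ :=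
  ∑ i, v i • (ContinuousLinearMap.proj i : (Fin n → ℝ) →L[ℝ] ℝ)

/-- The continuous linear map `w ↦ A *ᵥ w`. -/
noncomputable def mulVecCLM {n : ℕ} (A : Matrix (Fin n) (Fin n) ℝ) :
    (Fin n → ℝ) →L[ℝ] (Fin n → ℝ) :=
  LinearMap.toContinuousLinearMap A.mulVecLin

/-!
Along `v = α X̄ d` the barrier increase is at most the cubic model
`α gᵀd + α² dᵀHd / 2 + (L_H/6 + μ/(3(1-β))) α³‖d‖³`: the `f` part by Taylor's theorem with a
Lipschitz Hessian, the barrier part by `-log(1+s) ≤ -s + s²/2 + |s|³/(3(1-β))` for `|s| ≤ β`,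
applied to `s = α (X⁻¹X̄d)ᵢ`. As `gᵀd = -γ dᵀ(H + 2εH I)d` with `γ ≥ 1` and
`dᵀ(H + 2εH I)d ≥ εH‖d‖²`, the quadratic part is at most `-εH‖d‖² α`. Hence an increase of at
least `-(η/6)α³‖d‖³` forces `εH ≤ ((L_H + η)/6 + μ/(3(1-β))) α²‖d‖`, and `μ < 1` turns this into
the stated bound.
-/

lemma euclNorm_eq_norm_toLp {n : ℕ} (v : Fin n → ℝ) :
    euclNorm v = ‖WithLp.toLp 2 v‖ := by
  simp [euclNorm, EuclideanSpace.norm_eq]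

lemma euclNorm_nonneg {n : ℕ} (v : Fin n → ℝ) : 0 ≤ euclNorm v := Real.sqrt_nonneg _

lemma euclNorm_sq {n : ℕ} (v : Fin n → ℝ) : euclNorm v ^ 2 = ∑ i, v i ^ 2 :=
  Real.sq_sqrt (by positivity)

lemma dotProduct_self_eq_euclNorm_sq {n : ℕ} (v : Fin n → ℝ) : v ⬝ᵥ v = euclNorm v ^ 2 := by
  rw [euclNorm_sq]
  simp only [dotProduct, sq]

lemma abs_le_euclNorm {n : ℕ} (v : Fin n → ℝ) (i : Fin n) : |v i| ≤ euclNorm v := by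
  rw [euclNorm, ← Real.sqrt_sq_eq_abs]
  exact Real.sqrt_le_sqrt (Finset.single_le_sum (f := fun j ↦ v j ^ 2)
    (fun j _ ↦ sq_nonneg _) (Finset.mem_univ i))

lemma euclNorm_pos {n : ℕ} {v : Fin n → ℝ} (hv : v ≠ 0) : 0 < euclNorm v := by
  obtain ⟨i, hi⟩ := Function.ne_iff.1 hv
  exact (abs_pos.2 hi).trans_le (abs_le_euclNorm v i)

lemma euclNorm_le_euclNorm {n : ℕ} {v w : Fin n → ℝ} (h : ∀ i, |v i| ≤ |w i|) :
    euclNorm v ≤ euclNorm w :=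
  Real.sqrt_le_sqrt <| Finset.sum_le_sum fun i _ ↦ sq_le_sq.2 (h i)

lemma euclNorm_smul {n : ℕ} (t : ℝ) (v : Fin n → ℝ) : euclNorm (t • v) = |t| * euclNorm v := by
  rw [euclNorm_eq_norm_toLp, euclNorm_eq_norm_toLp, WithLp.toLp_smul, norm_smul, Real.norm_eq_abs]

lemma euclNorm_smul_mul_le {n : ℕ} {α : ℝ} (hα : 0 ≤ α) {w : Fin n → ℝ} (hw : ∀ i, |w i| ≤ 1)
    (d : Fin n → ℝ) : euclNorm (α • (w * d)) ≤ α * euclNorm d := by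
  calc euclNorm (α • (w * d)) ≤ euclNorm (α • d) := euclNorm_le_euclNorm fun i ↦ by
        simp only [Pi.smul_apply, Pi.mul_apply, smul_eq_mul, abs_mul]
        gcongr
        exact mul_le_of_le_one_left (abs_nonneg _) (hw i)
    _ = α * euclNorm d := by rw [euclNorm_smul, abs_of_nonneg hα]

lemma sum_abs_pow_three_le_euclNorm_pow_three {n : ℕ} (v : Fin n → ℝ) :
    ∑ i, |v i| ^ 3 ≤ euclNorm v ^ 3 :=
  calc ∑ i, |v i| ^ 3 = ∑ i, v i ^ 2 * |v i| := by
        congr 1 with i; rw [← sq_abs (v i)]; ring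
    _ ≤ ∑ i, v i ^ 2 * euclNorm v :=
        Finset.sum_le_sum fun i _ ↦ mul_le_mul_of_nonneg_left (abs_le_euclNorm v i) (sq_nonneg _)
    _ = euclNorm v ^ 3 := by rw [← Finset.sum_mul, ← euclNorm_sq]; ring

lemma dotProduct_mulVec_le_opNorm {n : ℕ} (A : Matrix (Fin n) (Fin n) ℝ) (v w : Fin n → ℝ) :
    w ⬝ᵥ (A *ᵥ v) ≤ opNorm A * euclNorm v * euclNorm w := by
  have h := real_inner_le_norm (WithLp.toLp 2 w) (toEuclideanCLM (𝕜 := ℝ) A (WithLp.toLp 2 v))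
  rw [inner_toEuclideanCLM] at h
  refine h.trans ?_
  rw [euclNorm_eq_norm_toLp, euclNorm_eq_norm_toLp, mul_comm]
  exact mul_le_mul_of_nonneg_right ((toEuclideanCLM (𝕜 := ℝ) A).le_opNorm _) (norm_nonneg _)

lemma dotProduct_diagonal_mul_mul_diagonal_mulVec {n : ℕ} (w d : Fin n → ℝ)
    (M : Matrix (Fin n) (Fin n) ℝ) :
    d ⬝ᵥ ((diagonal w * M * diagonal w) *ᵥ d) = (w * d) ⬝ᵥ (M *ᵥ (w * d)) := by
  have hw : diagonal w *ᵥ d = w * d := by ext i; simp [mulVec_diagonal]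
  rw [← mulVec_mulVec, ← mulVec_mulVec, dotProduct_mulVec, hw]
  congr 1
  ext i; simp [vecMul_diagonal, mul_comm]

lemma dotCLM_apply {n : ℕ} (v w : Fin n → ℝ) : dotCLM v w = v ⬝ᵥ w := by
  simp [dotCLM, dotProduct]

lemma mulVecCLM_apply {n : ℕ} (A : Matrix (Fin n) (Fin n) ℝ) (w : Fin n → ℝ) :
    mulVecCLM A w = A *ᵥ w := rfl

lemma sub_le_sub_of_hasDerivAt_le {f g f' g' : ℝ → ℝ} {a b : ℝ} (hab : a ≤ b)
    (hf : ∀ t ∈ Set.Icc a b, HasDerivAt f (f' t) t) (hg : ∀ t ∈ Set.Icc a b, HasDerivAt g (g' t) t)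
    (hle : ∀ t ∈ Set.Icc a b, f' t ≤ g' t) : f b - f a ≤ g b - g a := by
  have hmono : MonotoneOn (fun t ↦ g t - f t) (Set.Icc a b) := by
    refine monotoneOn_of_hasDerivWithinAt_nonneg (f' := fun t ↦ g' t - f' t) (convex_Icc a b)
      (fun t ht ↦ ((hg t ht).sub (hf t ht)).continuousAt.continuousWithinAt)
      (fun t ht ↦ ((hg t (interior_subset ht)).sub (hf t (interior_subset ht))).hasDerivWithinAt)
      (fun t ht ↦ sub_nonneg.2 (hle t (interior_subset ht)))
  have := hmono (Set.left_mem_Icc.2 hab) (Set.right_mem_Icc.2 hab) hab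
  simp only at this
  linarith

lemma le_taylor_cubic_of_hasDerivAt {φ ψ κ : ℝ → ℝ} {M : ℝ}
    (hφ : ∀ t ∈ Set.Icc (0 : ℝ) 1, HasDerivAt φ (ψ t) t)
    (hψ : ∀ t ∈ Set.Icc (0 : ℝ) 1, HasDerivAt ψ (κ t) t)
    (hκ : ∀ t ∈ Set.Icc (0 : ℝ) 1, κ t - κ 0 ≤ M * t) :
    φ 1 ≤ φ 0 + ψ 0 + κ 0 / 2 + M / 6 := by
  have hψ_le : ∀ t ∈ Set.Icc (0 : ℝ) 1, ψ t ≤ ψ 0 + κ 0 * t + M / 2 * t ^ 2 := by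
    intro t ht
    have := sub_le_sub_of_hasDerivAt_le (g := fun s ↦ κ 0 * s + M / 2 * s ^ 2)
      (g' := fun s ↦ κ 0 + M * s) ht.1
      (fun s hs ↦ hψ s ⟨hs.1, hs.2.trans ht.2⟩)
      (fun s _ ↦ (((hasDerivAt_id' s).const_mul (κ 0)).add
        ((hasDerivAt_pow 2 s).const_mul (M / 2))).congr_deriv (by ring))
      (fun s hs ↦ by linarith [hκ s ⟨hs.1, hs.2.trans ht.2⟩])
    linarith
  have := sub_le_sub_of_hasDerivAt_le (g := fun s ↦ ψ 0 * s + κ 0 / 2 * s ^ 2 + M / 6 * s ^ 3)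
    zero_le_one hφ
    (fun s _ ↦ ((((hasDerivAt_id' s).const_mul (ψ 0)).add
        ((hasDerivAt_pow 2 s).const_mul (κ 0 / 2))).add
        ((hasDerivAt_pow 3 s).const_mul (M / 6))).congr_deriv (by ring)) hψ_le
  linarith

lemma neg_log_one_add_le {β s : ℝ} (hβ : β < 1) (hs : |s| ≤ β) :
    -Real.log (1 + s) ≤ -s + s ^ 2 / 2 + |s| ^ 3 / (3 * (1 - β)) := by
  set R : ℝ → ℝ := fun u ↦ -Real.log (1 + u) + u - u ^ 2 / 2 with hR_def
  have hR : ∀ u, -1 < u → HasDerivAt R (-(u ^ 2 / (1 + u))) u := by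
    intro u hu
    have h1u : 1 + u ≠ 0 := by linarith
    exact ((((hasDerivAt_id' u).const_add 1).log h1u).neg.add (hasDerivAt_id' u)).sub
      ((hasDerivAt_pow 2 u).div_const 2) |>.congr_deriv (by field_simp; ring)
  have hR0 : R 0 = 0 := by simp [hR_def]
  suffices R s ≤ |s| ^ 3 / (3 * (1 - β)) by simp only [hR_def] at this; linarith
  obtain ⟨hsβ, -⟩ := abs_le.1 hs
  have hβ' : 0 < 1 - β := by linarith
  rcases le_or_gt 0 s with hs0 | hs0
  · have := sub_le_sub_of_hasDerivAt_le (g := fun _ ↦ (0 : ℝ)) (g' := fun _ ↦ 0) hs0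
      (fun u hu ↦ hR u (by linarith [hu.1])) (fun u _ ↦ hasDerivAt_const u 0)
      (fun u hu ↦ by
        have : 0 < 1 + u := by linarith [hu.1]
        simp only [Left.neg_nonpos_iff]; positivity)
    have : 0 ≤ |s| ^ 3 / (3 * (1 - β)) := by positivity
    linarith
  · have := sub_le_sub_of_hasDerivAt_le (f := fun u ↦ -(u ^ 3 / (3 * (1 - β))))
      (f' := fun u ↦ -(u ^ 2 / (1 - β))) hs0.le
      (fun u _ ↦ ((hasDerivAt_pow 3 u).div_const _).neg.congr_deriv (by field_simp; ring))
      (fun u hu ↦ hR u (by linarith [hu.1]))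
      (fun u hu ↦ by
        rw [neg_le_neg_iff]
        exact div_le_div_of_nonneg_left (sq_nonneg u) hβ' (by linarith [hu.1]))
    have hB : -(0 ^ 3 / (3 * (1 - β))) - -(s ^ 3 / (3 * (1 - β))) = -(|s| ^ 3 / (3 * (1 - β))) := by
      rw [abs_of_neg hs0]; ring
    linarith

lemma sum_log_sub_sum_log_add_le {n : ℕ} {β : ℝ} (hβ : β < 1) {x v : Fin n → ℝ}
    (hx : ∀ i, 0 < x i) (hv : ∀ i, |v i / x i| ≤ β) :
    ∑ i, Real.log (x i) - ∑ i, Real.log ((x + v) i)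
      ≤ -∑ i, v i / x i + (∑ i, (v i / x i) ^ 2) / 2
        + euclNorm (fun i ↦ v i / x i) ^ 3 / (3 * (1 - β)) := by
  have hsplit (i : Fin n) :
      Real.log ((x + v) i) = Real.log (x i) + Real.log (1 + v i / x i) := by
    have h1 : 0 < 1 + v i / x i := by linarith [neg_abs_le (v i / x i), hv i]
    rw [← Real.log_mul (hx i).ne' h1.ne', Pi.add_apply, mul_add, mul_div_cancel₀ _ (hx i).ne',
      mul_one]
  have hcube := sum_abs_pow_three_le_euclNorm_pow_three (fun i ↦ v i / x i)
  have hβ' : 0 < 1 - β := by linarith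
  calc ∑ i, Real.log (x i) - ∑ i, Real.log ((x + v) i)
      = ∑ i, -Real.log (1 + v i / x i) := by
        simp only [hsplit, Finset.sum_add_distrib, Finset.sum_neg_distrib]; ring
    _ ≤ ∑ i, (-(v i / x i) + (v i / x i) ^ 2 / 2 + |v i / x i| ^ 3 / (3 * (1 - β))) :=
        Finset.sum_le_sum fun i _ ↦ neg_log_one_add_le hβ (hv i)
    _ = -∑ i, v i / x i + (∑ i, (v i / x i) ^ 2) / 2
          + (∑ i, |v i / x i| ^ 3) / (3 * (1 - β)) := by
        simp only [Finset.sum_add_distrib, Finset.sum_neg_distrib, Finset.sum_div]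
    _ ≤ _ := by gcongr

noncomputable def logBarrier {n : ℕ} (f : (Fin n → ℝ) → ℝ) (μ : ℝ) (x : Fin n → ℝ) : ℝ :=
  f x - μ * ∑ i, Real.log (x i)

section LipschitzHessian

variable {n : ℕ} {f : (Fin n → ℝ) → ℝ} {gradf : (Fin n → ℝ) → (Fin n → ℝ)}
  {hessf : (Fin n → ℝ) → Matrix (Fin n) (Fin n) ℝ} {L_H : ℝ}

lemma le_taylor_cubic_of_lipschitz_hessian
    (hgrad : ∀ y, HasFDerivAt f (dotCLM (gradf y)) y)
    (hhess : ∀ y, HasFDerivAt gradf (mulVecCLM (hessf y)) y)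
    (hlip : ∀ y z, opNorm (hessf y - hessf z) ≤ L_H * euclNorm (y - z)) (x v : Fin n → ℝ) :
    f (x + v) ≤ f x + v ⬝ᵥ gradf x + v ⬝ᵥ (hessf x *ᵥ v) / 2 + L_H / 6 * euclNorm v ^ 3 := by
  have hline (t : ℝ) : HasDerivAt (fun s : ℝ ↦ x + s • v) v t := by
    simpa using ((hasDerivAt_id t).smul_const v).const_add x
  have hφ (t : ℝ) : HasDerivAt (fun s ↦ f (x + s • v)) (v ⬝ᵥ gradf (x + t • v)) t := by
    have h := (hgrad _).comp_hasDerivAt t (hline t)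
    rwa [dotCLM_apply, dotProduct_comm] at h
  have hψ (t : ℝ) : HasDerivAt (fun s ↦ v ⬝ᵥ gradf (x + s • v))
      (v ⬝ᵥ (hessf (x + t • v) *ᵥ v)) t := by
    have h := (dotCLM v).hasFDerivAt.comp_hasDerivAt t ((hhess _).comp_hasDerivAt t (hline t))
    rw [dotCLM_apply, mulVecCLM_apply] at h
    exact h.congr_of_eventuallyEq (Filter.Eventually.of_forall fun s ↦ (dotCLM_apply v _).symm)
  have hκ : ∀ t ∈ Set.Icc (0 : ℝ) 1,
      v ⬝ᵥ (hessf (x + t • v) *ᵥ v) - v ⬝ᵥ (hessf (x + (0 : ℝ) • v) *ᵥ v)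
        ≤ L_H * euclNorm v ^ 3 * t := by
    intro t ht
    calc v ⬝ᵥ (hessf (x + t • v) *ᵥ v) - v ⬝ᵥ (hessf (x + (0 : ℝ) • v) *ᵥ v)
        = v ⬝ᵥ ((hessf (x + t • v) - hessf x) *ᵥ v) := by
          rw [zero_smul, add_zero, sub_mulVec, dotProduct_sub]
      _ ≤ opNorm (hessf (x + t • v) - hessf x) * euclNorm v * euclNorm v :=
          dotProduct_mulVec_le_opNorm _ _ _
      _ ≤ L_H * euclNorm (t • v) * euclNorm v * euclNorm v := by
          have := euclNorm_nonneg v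
          gcongr
          simpa using hlip (x + t • v) x
      _ = L_H * euclNorm v ^ 3 * t := by
          rw [euclNorm_smul, abs_of_nonneg ht.1]; ring
  have := le_taylor_cubic_of_hasDerivAt (fun t _ ↦ hφ t) (fun t _ ↦ hψ t) hκ
  simp only [one_smul, zero_smul, add_zero] at this
  linarith

lemma logBarrier_add_sub_le {μ β : ℝ} (hgrad : ∀ y, HasFDerivAt f (dotCLM (gradf y)) y)
    (hhess : ∀ y, HasFDerivAt gradf (mulVecCLM (hessf y)) y)
    (hlip : ∀ y z, opNorm (hessf y - hessf z) ≤ L_H * euclNorm (y - z)) (hμ : 0 ≤ μ)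
    (hβ : β < 1) {x v : Fin n → ℝ} (hx : ∀ i, 0 < x i) (hv : ∀ i, |v i / x i| ≤ β) :
    logBarrier f μ (x + v) - logBarrier f μ x
      ≤ v ⬝ᵥ (fun i ↦ gradf x i - μ / x i)
        + v ⬝ᵥ ((hessf x + μ • diagonal (fun i ↦ (x i ^ 2)⁻¹)) *ᵥ v) / 2
        + L_H / 6 * euclNorm v ^ 3 + μ / (3 * (1 - β)) * euclNorm (fun i ↦ v i / x i) ^ 3 := by
  have hgrad_eq : v ⬝ᵥ (fun i ↦ gradf x i - μ / x i) = v ⬝ᵥ gradf x - μ * ∑ i, v i / x i := by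
    simp only [dotProduct, mul_sub, Finset.sum_sub_distrib, Finset.mul_sum, mul_div_assoc']
    congr 1; exact Finset.sum_congr rfl fun i _ ↦ by ring
  have hhess_eq : v ⬝ᵥ ((hessf x + μ • diagonal (fun i ↦ (x i ^ 2)⁻¹)) *ᵥ v)
      = v ⬝ᵥ (hessf x *ᵥ v) + μ * ∑ i, (v i / x i) ^ 2 := by
    simp only [add_mulVec, smul_mulVec, dotProduct_add, dotProduct_smul, smul_eq_mul]
    congr 2
    simp only [dotProduct, mulVec_diagonal]
    exact Finset.sum_congr rfl fun i _ ↦ by ring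
  have htaylor := le_taylor_cubic_of_lipschitz_hessian hgrad hhess hlip x v
  have hlog := mul_le_mul_of_nonneg_left (sum_log_sub_sum_log_add_le hβ hx hv) hμ
  rw [hgrad_eq, hhess_eq]
  simp only [logBarrier]
  have : μ * (euclNorm (fun i ↦ v i / x i) ^ 3 / (3 * (1 - β)))
      = μ / (3 * (1 - β)) * euclNorm (fun i ↦ v i / x i) ^ 3 := by ring
  linarith

lemma logBarrier_scaled_step_le {μ β α : ℝ} (hgrad : ∀ y, HasFDerivAt f (dotCLM (gradf y)) y)
    (hhess : ∀ y, HasFDerivAt gradf (mulVecCLM (hessf y)) y)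
    (hlip : ∀ y z, opNorm (hessf y - hessf z) ≤ L_H * euclNorm (y - z)) (hLH : 0 ≤ L_H)
    (hμ : 0 ≤ μ) (hβ : β < 1) {x d : Fin n → ℝ} (hx : ∀ i, 0 < x i)
    (hd : ‖(fun i ↦ (min (x i) 1 / x i) * d i : Fin n → ℝ)‖ ≤ β) (hα0 : 0 ≤ α) (hα1 : α ≤ 1) :
    logBarrier f μ (x + α • (fun i ↦ min (x i) 1 * d i)) - logBarrier f μ x
      ≤ α * ((fun i ↦ min (x i) 1 * (gradf x i - μ / x i)) ⬝ᵥ d)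
        + α ^ 2 * (d ⬝ᵥ ((diagonal (fun i ↦ min (x i) 1)
            * (hessf x + μ • diagonal (fun i ↦ (x i ^ 2)⁻¹))
            * diagonal (fun i ↦ min (x i) 1)) *ᵥ d)) / 2
        + (L_H / 6 + μ / (3 * (1 - β))) * α ^ 3 * euclNorm d ^ 3 := by
  set xbar : Fin n → ℝ := fun i ↦ min (x i) 1
  set v := α • (xbar * d)
  have hxbar (i : Fin n) : |xbar i| ≤ 1 := by
    rw [abs_of_pos (lt_min (hx i) one_pos)]; exact min_le_right _ _
  have hxbar_div (i : Fin n) : |(xbar / x) i| ≤ 1 := by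
    rw [Pi.div_apply, abs_of_pos (div_pos (lt_min (hx i) one_pos) (hx i)), div_le_one (hx i)]
    exact min_le_left _ _
  have hv_div : (fun i ↦ v i / x i) = α • (xbar / x * d) := by
    ext i; simp only [v, Pi.smul_apply, Pi.mul_apply, Pi.div_apply, smul_eq_mul]; ring
  have hv_div_le (i : Fin n) : |v i / x i| ≤ β := by
    have hi := (norm_le_pi_norm (fun i ↦ (min (x i) 1 / x i) * d i) i).trans hd
    rw [Real.norm_eq_abs] at hi
    rw [show v i / x i = α * (xbar i / x i * d i) from congrFun hv_div i, abs_mul,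
      abs_of_nonneg hα0]
    nlinarith [abs_nonneg (xbar i / x i * d i)]
  have hgrad_eq : v ⬝ᵥ (fun i ↦ gradf x i - μ / x i)
      = α * ((fun i ↦ xbar i * (gradf x i - μ / x i)) ⬝ᵥ d) := by
    simp only [v, dotProduct, Pi.smul_apply, Pi.mul_apply, smul_eq_mul, Finset.mul_sum]
    exact Finset.sum_congr rfl fun i _ ↦ by ring
  have hhess_eq : v ⬝ᵥ ((hessf x + μ • diagonal (fun i ↦ (x i ^ 2)⁻¹)) *ᵥ v)
      = α ^ 2 * (d ⬝ᵥ ((diagonal xbar * (hessf x + μ • diagonal (fun i ↦ (x i ^ 2)⁻¹))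
          * diagonal xbar) *ᵥ d)) := by
    rw [dotProduct_diagonal_mul_mul_diagonal_mulVec]
    simp only [v, mulVec_smul, dotProduct_smul, smul_dotProduct, smul_eq_mul]
    ring
  have hv_norm := euclNorm_smul_mul_le hα0 hxbar d
  have hv_div_norm := euclNorm_smul_mul_le hα0 hxbar_div d
  rw [← hv_div] at hv_div_norm
  have hdecrease := logBarrier_add_sub_le hgrad hhess hlip hμ hβ hx hv_div_le
  rw [hgrad_eq, hhess_eq] at hdecrease
  have hβ' : 0 < 1 - β := by linarith
  have hcube : L_H / 6 * euclNorm v ^ 3 + μ / (3 * (1 - β)) * euclNorm (fun i ↦ v i / x i) ^ 3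
      ≤ (L_H / 6 + μ / (3 * (1 - β))) * α ^ 3 * euclNorm d ^ 3 := by
    have := euclNorm_nonneg v
    have := euclNorm_nonneg fun i ↦ v i / x i
    calc _ ≤ L_H / 6 * (α * euclNorm d) ^ 3 + μ / (3 * (1 - β)) * (α * euclNorm d) ^ 3 := by
          gcongr
      _ = _ := by ring
  refine hdecrease.trans ?_
  rw [add_assoc _ (L_H / 6 * euclNorm v ^ 3)]
  exact add_le_add le_rfl hcube

end LipschitzHessian

lemma sq_ge_of_cubic_decrease_fails {L η μ ε β γ α ν Q : ℝ} (hLη : 0 ≤ L + η) (hμ : μ ≤ 1)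
    (hε : 0 < ε) (hβ0 : 0 ≤ β) (hβ1 : β < 1) (hα0 : 0 < α) (hα1 : α ≤ 1) (hν : 0 < ν)
    (hγ : 1 ≤ γ) (hQ : ε * ν ^ 2 ≤ Q)
    (hdec : -(η / 6) * α ^ 3 * ν ^ 3
      ≤ α * (-γ * Q) + α ^ 2 * (Q - 2 * ε * ν ^ 2) / 2
        + (L / 6 + μ / (3 * (1 - β))) * α ^ 3 * ν ^ 3) :
    6 * (1 - β) ^ 2 * ε / (((L + η) * (1 - β) ^ 2 + (2 - β)) * ν) ≤ α ^ 2 := by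
  set C := (L + η) / 6 + μ / (3 * (1 - β))
  have hβ' : 0 < 1 - β := by linarith
  have hβ2 : 0 < 2 - β := by linarith
  have hQ0 : 0 < Q := lt_of_lt_of_le (by positivity) hQ
  have hε_le : ε ≤ C * α ^ 2 * ν := by
    have h1 : 0 ≤ α * (γ - 1) * Q := mul_nonneg (mul_nonneg hα0.le (sub_nonneg.2 hγ)) hQ0.le
    have h2 : 0 ≤ (α - α ^ 2 / 2) * (Q - ε * ν ^ 2) :=
      mul_nonneg (by nlinarith) (sub_nonneg.2 hQ)
    have h3 : 0 ≤ α ^ 2 * ε * ν ^ 2 / 2 := by positivity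
    have : α * ν ^ 2 * ε ≤ α * ν ^ 2 * (C * α ^ 2 * ν) := by
      simp only [C]; nlinarith
    exact le_of_mul_le_mul_left this (by positivity)
  have hC : 6 * (1 - β) ^ 2 * C ≤ (L + η) * (1 - β) ^ 2 + (2 - β) := by
    have : 6 * (1 - β) ^ 2 * C = (L + η) * (1 - β) ^ 2 + 2 * μ * (1 - β) := by
      simp only [C]; field_simp; ring
    nlinarith
  have hD : 0 < (L + η) * (1 - β) ^ 2 + (2 - β) := by positivity
  rw [div_le_iff₀ (by positivity)]
  calc 6 * (1 - β) ^ 2 * ε ≤ 6 * (1 - β) ^ 2 * (C * α ^ 2 * ν) := by gcongr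
    _ = 6 * (1 - β) ^ 2 * C * (α ^ 2 * ν) := by ring
    _ ≤ ((L + η) * (1 - β) ^ 2 + (2 - β)) * (α ^ 2 * ν) := by gcongr
    _ = α ^ 2 * (((L + η) * (1 - β) ^ 2 + (2 - β)) * ν) := by ring

theorem stmt11_general {n : ℕ}
    (f : (Fin n → ℝ) → ℝ)
    (gradf : (Fin n → ℝ) → (Fin n → ℝ))
    (hessf : (Fin n → ℝ) → Matrix (Fin n) (Fin n) ℝ)
    (hgrad : ∀ y : Fin n → ℝ, HasFDerivAt f (dotCLM (gradf y)) y)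
    (hhess : ∀ y : Fin n → ℝ, HasFDerivAt gradf (mulVecCLM (hessf y)) y)
    (L_H : ℝ) (hLH : 0 ≤ L_H)
    (hlip : ∀ y z : Fin n → ℝ, opNorm (hessf y - hessf z) ≤ L_H * euclNorm (y - z))
    (μ : ℝ) (hμ : μ ∈ Set.Ioo (0:ℝ) 1)
    (η : ℝ) (hη : η ∈ Set.Ioo (0:ℝ) 1)
    (εH : ℝ) (hεH : 0 < εH)
    (β : ℝ) (hβ : β ∈ Set.Ioo (0:ℝ) 1)
    (x : Fin n → ℝ) (hx : ∀ i, 0 < x i)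
    (d : Fin n → ℝ) (hdne : d ≠ 0)
    (hd : ‖(fun i => (min (x i) 1 / x i) * d i : Fin n → ℝ)‖ ≤ β)
    (g : Fin n → ℝ)
    (hg : g = fun i => min (x i) 1 * (gradf x i - μ / x i))
    (H : Matrix (Fin n) (Fin n) ℝ)
    (hH : H = Matrix.diagonal (fun i => min (x i) 1)
        * (hessf x + μ • Matrix.diagonal (fun i => ((x i)^2)⁻¹))
        * Matrix.diagonal (fun i => min (x i) 1))
    (hcurv : εH * euclNorm d ^ 2
      ≤ d ⬝ᵥ ((H + (2 * εH) • (1 : Matrix (Fin n) (Fin n) ℝ)) *ᵥ d))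
    (γ : ℝ) (hγ : 1 ≤ γ)
    (hgd : g ⬝ᵥ d = -γ * (d ⬝ᵥ ((H + (2 * εH) • (1 : Matrix (Fin n) (Fin n) ℝ)) *ᵥ d))) :
    ∀ α ∈ Set.Ioc (0:ℝ) 1,
      (f (x + α • (fun i => min (x i) 1 * d i : Fin n → ℝ))
          - μ * ∑ i, Real.log ((x + α • (fun i => min (x i) 1 * d i : Fin n → ℝ)) i)
        - (f x - μ * ∑ i, Real.log (x i))
        ≥ -(η/6) * α^3 * euclNorm d ^ 3) →
      6 * (1-β)^2 * εH / (((L_H + η) * (1-β)^2 + (2-β)) * euclNorm d) ≤ α^2 := by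
  rintro α ⟨hα0, hα1⟩ hφ
  have hdHd : d ⬝ᵥ (H *ᵥ d)
      = d ⬝ᵥ ((H + (2 * εH) • (1 : Matrix (Fin n) (Fin n) ℝ)) *ᵥ d) - 2 * εH * euclNorm d ^ 2 := by
    rw [add_mulVec, dotProduct_add, smul_mulVec, one_mulVec, dotProduct_smul, smul_eq_mul,
      dotProduct_self_eq_euclNorm_sq]
    ring
  have hstep := logBarrier_scaled_step_le hgrad hhess hlip hLH hμ.1.le hβ.2 hx hd hα0.le hα1
  rw [← hg, ← hH, hgd, hdHd] at hstep
  exact sq_ge_of_cubic_decrease_fails (by linarith [hη.1]) hμ.2.le hεH hβ.1.le hβ.2 hα0 hα1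
    (euclNorm_pos hdne) hγ hcurv (le_trans hφ hstep)

/-- with `f` twice continuously differentiable, Hessian `L_H`-Lipschitz in
operator norm, `μ, η ∈ (0,1)`, `εH > 0`, `β ∈ (0,1)`, `x > 0`, `d ≠ 0` with
`‖X⁻¹X̄d‖∞ ≤ β`, `g = X̄(∇f(x) − μX⁻¹e)`, `H = X̄(∇²f(x) + μX⁻²)X̄`, and suppose
`dᵀ(H + 2εH I)d ≥ εH‖d‖²` and `gᵀd = −γ dᵀ(H + 2εH I)d` for some `γ ≥ 1`. Then for
every `α ∈ (0,1]`: if `φ_μ(x + αX̄d) − φ_μ(x) ≥ −(η/6)α³‖d‖³` then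
`α² ≥ 6(1−β)² εH / (((L_H + η)(1−β)² + (2−β)) ‖d‖)`. -/
theorem stmt11 {n : ℕ}
    (f : (Fin n → ℝ) → ℝ)
    (gradf : (Fin n → ℝ) → (Fin n → ℝ))
    (hessf : (Fin n → ℝ) → Matrix (Fin n) (Fin n) ℝ)
    (hgrad : ∀ y : Fin n → ℝ, HasFDerivAt f (dotCLM (gradf y)) y)
    (hhess : ∀ y : Fin n → ℝ, HasFDerivAt gradf (mulVecCLM (hessf y)) y)
    (hhesscont : Continuous hessf)
    (L_H : ℝ) (hLH : 0 ≤ L_H)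
    (hlip : ∀ y z : Fin n → ℝ, opNorm (hessf y - hessf z) ≤ L_H * euclNorm (y - z))
    (μ : ℝ) (hμ : μ ∈ Set.Ioo (0:ℝ) 1)
    (η : ℝ) (hη : η ∈ Set.Ioo (0:ℝ) 1)
    (εH : ℝ) (hεH : 0 < εH)
    (β : ℝ) (hβ : β ∈ Set.Ioo (0:ℝ) 1)
    (x : Fin n → ℝ) (hx : ∀ i, 0 < x i)
    (d : Fin n → ℝ) (hdne : d ≠ 0)
    (hd : ‖(fun i => (min (x i) 1 / x i) * d i : Fin n → ℝ)‖ ≤ β)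
    (g : Fin n → ℝ)
    (hg : g = fun i => min (x i) 1 * (gradf x i - μ / x i))
    (H : Matrix (Fin n) (Fin n) ℝ)
    (hH : H = Matrix.diagonal (fun i => min (x i) 1)
        * (hessf x + μ • Matrix.diagonal (fun i => ((x i)^2)⁻¹))
        * Matrix.diagonal (fun i => min (x i) 1))
    (hcurv : εH * euclNorm d ^ 2
      ≤ d ⬝ᵥ ((H + (2 * εH) • (1 : Matrix (Fin n) (Fin n) ℝ)) *ᵥ d))
    (γ : ℝ) (hγ : 1 ≤ γ)
    (hgd : g ⬝ᵥ d = -γ * (d ⬝ᵥ ((H + (2 * εH) • (1 : Matrix (Fin n) (Fin n) ℝ)) *ᵥ d))) :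
    ∀ α ∈ Set.Ioc (0:ℝ) 1,
      (f (x + α • (fun i => min (x i) 1 * d i : Fin n → ℝ))
          - μ * ∑ i, Real.log ((x + α • (fun i => min (x i) 1 * d i : Fin n → ℝ)) i)
        - (f x - μ * ∑ i, Real.log (x i))
        ≥ -(η/6) * α^3 * euclNorm d ^ 3) →
      6 * (1-β)^2 * εH / (((L_H + η) * (1-β)^2 + (2-β)) * euclNorm d) ≤ α^2 :=
  stmt11_general f gradf hessf hgrad hhess L_H hLH hlip μ hμ η hη εH hεH β hβ x hx d hdne hd g hg H
    hH hcurv γ hγ hgd
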